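/- The minimum number of parts in a partition of the set of all 4^N − 1 non-identity N-qubit Pauli strings into families of pairwise commuting strings is exactly 2^N + 1; that is, at least 2^N + 1 pairwise-commuting families are required, and a partition into 2^N + 1 pairwise-commuting families, each of size 2^N − 1, exists. -/

import Mathlib

open Matrix Finset

inductive Pauli : Type
  | I | X | Y | Z
  deriving DecidableEq

instance : Fintype Pauli :=
  ⟨{.I, .X, .Y, .Z}, fun x => by cases x <;> simp⟩

noncomputable def Pauli.mat : Pauli → Matrix (Fin 2) (Fin 2) ℂ
  | .I => 1
  | .X => !![0, 1; 1, 0]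
  | .Y => !![0, -Complex.I; Complex.I, 0]
  | .Z => !![1, 0; 0, -1]

/-- An `N`-qubit Pauli string: a function from qubit indices to single-qubit Paulis. -/
abbrev PauliString (N : ℕ) := Fin N → Pauli

/-- The `2^N × 2^N` matrix of a Pauli string, as the tensor (Kronecker) product of its
entries, with rows/columns indexed by `Fin N → Fin 2`. -/
noncomputable def Pmat {N : ℕ} (A : PauliString N) :
    Matrix (Fin N → Fin 2) (Fin N → Fin 2) ℂ :=
  Matrix.of fun x y => ∏ j, (A j).mat (x j) (y j)

/-- The set of all `4^N - 1` non-identity `N`-qubit Pauli strings. -/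
def nonIdStrings (N : ℕ) : Finset (PauliString N) :=
  Finset.univ.filter (fun A => A ≠ fun _ => Pauli.I)

/-- `P` is a partition of the finite set `T` of Pauli strings into families of pairwise
commuting strings: the parts are nonempty, pairwise disjoint, cover `T`, and each part
consists of pairwise commuting strings. -/
def IsCommPartition {N : ℕ} (T : Finset (PauliString N))
    (P : Finset (Finset (PauliString N))) : Prop :=
  (∀ S ∈ P, S.Nonempty) ∧
  (P : Set (Finset (PauliString N))).PairwiseDisjoint id ∧
  P.sup id = T ∧
  ∀ S ∈ P, ∀ A ∈ S, ∀ B ∈ S, Pmat A * Pmat B = Pmat B * Pmat A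

/-!
Write a Pauli string as a vector of `𝔽₂ᴺ × 𝔽₂ᴺ` (its `X`-part and its `Z`-part). Two strings
commute exactly when the standard symplectic form vanishes on their vectors, so a commuting
family of non-identity strings spans an isotropic subspace; such a subspace has dimension at
most `N`, hence the family has at most `2^N - 1` members, and covering the
`4^N - 1 = (2^N + 1)(2^N - 1)` non-identity strings needs at least `2^N + 1` families.

Conversely, let `L = 𝔽_{2^N}` and read the two halves of a vector as coordinates of elements of
`L` in a basis and in its trace-dual basis. The symplectic form becomes
`(x, y) ↦ Tr(x₁ y₂ - y₁ x₂)`, which vanishes on each of the `2^N + 1` lines through the origin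
of `L²`; the nonzero points of these lines give the required partition.
-/

lemma AddChar.map_sum_eq_prod {ι A M : Type*} [AddCommMonoid A] [CommMonoid M]
    (ψ : AddChar A M) (s : Finset ι) (f : ι → A) :
    ψ (∑ i ∈ s, f i) = ∏ i ∈ s, ψ (f i) := by
  have h := map_prod ψ.toMonoidHom (fun i => Multiplicative.ofAdd (f i)) s
  rwa [← ofAdd_sum] at h

noncomputable def parityChar : AddChar (ZMod 2) ℂ :=
  AddChar.zmodChar 2 (by norm_num : (-1 : ℂ) ^ 2 = 1)

lemma parityChar_one : parityChar 1 = -1 := by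
  rw [parityChar, AddChar.zmodChar_apply, ZMod.val_one, pow_one]

lemma parityChar_eq_one_iff {a : ZMod 2} : parityChar a = 1 ↔ a = 0 := by
  rcases (by decide : ∀ b : ZMod 2, b = 0 ∨ b = 1) a with rfl | rfl
  · simp
  · rw [parityChar_one]
    constructor <;> intro h
    · norm_num at h
    · exact absurd h (by decide)

namespace Matrix

variable {ι m n p R : Type*} [Fintype ι] [CommSemiring R]

def kroneckerPi (M : ι → Matrix m n R) : Matrix (ι → m) (ι → n) R :=
  of fun x y => ∏ i, M i (x i) (y i)

lemma kroneckerPi_mul [DecidableEq ι] [Fintype n] (M : ι → Matrix m n R)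
    (M' : ι → Matrix n p R) :
    kroneckerPi M * kroneckerPi M' = kroneckerPi fun i => M i * M' i := by
  ext x y
  simp only [kroneckerPi, mul_apply, of_apply, ← Finset.prod_mul_distrib]
  rw [Finset.prod_univ_sum, Fintype.piFinset_univ]

lemma kroneckerPi_one [DecidableEq m] :
    kroneckerPi (fun _ : ι => (1 : Matrix m m R)) = 1 := by
  ext x y
  simp only [kroneckerPi, of_apply, one_apply]
  by_cases h : x = y
  · simp [h]
  · obtain ⟨i, hi⟩ := Function.ne_iff.mp h
    rw [if_neg h]
    exact Finset.prod_eq_zero (Finset.mem_univ i) (if_neg hi)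

lemma kroneckerPi_smul (c : ι → R) (M : ι → Matrix m n R) :
    kroneckerPi (fun i => c i • M i) = (∏ i, c i) • kroneckerPi M := by
  ext x y
  simp [kroneckerPi, Finset.prod_mul_distrib]

end Matrix

namespace Pauli

def symplecticEquiv : Pauli ≃ ZMod 2 × ZMod 2 where
  toFun
    | .I => (0, 0)
    | .X => (1, 0)
    | .Z => (0, 1)
    | .Y => (1, 1)
  invFun v := if v.1 = 0 then (if v.2 = 0 then .I else .Z) else (if v.2 = 0 then .X else .Y)
  left_inv := by decide
  right_inv := by decide

lemma mat_mul_mat (P Q : Pauli) :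
    P.mat * Q.mat = parityChar ((symplecticEquiv P).1 * (symplecticEquiv Q).2 -
      (symplecticEquiv Q).1 * (symplecticEquiv P).2) • (Q.mat * P.mat) := by
  cases P <;> cases Q <;>
    · ext i j
      fin_cases i <;> fin_cases j <;>
        simp [mat, symplecticEquiv, parityChar_one, mul_apply, Fin.sum_univ_two]

lemma mat_mul_self (P : Pauli) : P.mat * P.mat = 1 := by
  cases P <;>
    · ext i j
      fin_cases i <;> fin_cases j <;> simp [mat, mul_apply, Fin.sum_univ_two, one_apply]

end Pauli

namespace LinearMap.BilinForm

variable {K V : Type*} [Field K] [AddCommGroup V] [Module K V]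

lemma span_le_orthogonal_span {B : LinearMap.BilinForm K V} {s : Set V}
    (hs : ∀ v ∈ s, ∀ w ∈ s, B v w = 0) :
    Submodule.span K s ≤ B.orthogonal (Submodule.span K s) := by
  refine Submodule.span_le.mpr fun w hw => ?_
  rw [SetLike.mem_coe, mem_orthogonal_iff]
  exact fun v hv => (Submodule.span_le (p := LinearMap.ker (B.flip w))).mpr
    (fun v hv => hs v hv w hw) hv

lemma two_mul_finrank_le_of_le_orthogonal [FiniteDimensional K V] {B : LinearMap.BilinForm K V}
    (hB : B.Nondegenerate) {W : Submodule K V} (hW : W ≤ B.orthogonal W) :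
    2 * Module.finrank K W ≤ Module.finrank K V := by
  have := Submodule.finrank_mono hW
  rw [finrank_orthogonal hB] at this
  have := Submodule.finrank_le W
  omega

end LinearMap.BilinForm

section Symplectic

variable (K ι : Type*) [Fintype ι]

def symplecticForm [CommRing K] : LinearMap.BilinForm K ((ι → K) × (ι → K)) :=
  LinearMap.mk₂ K (fun v w => ∑ i, (v.1 i * w.2 i - w.1 i * v.2 i))
    (fun _ _ _ => by
      simp only [Prod.fst_add, Prod.snd_add, Pi.add_apply, ← Finset.sum_add_distrib]
      exact Finset.sum_congr rfl fun _ _ => by ring)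
    (fun _ _ _ => by
      simp only [Prod.smul_fst, Prod.smul_snd, Pi.smul_apply, smul_eq_mul, Finset.mul_sum]
      exact Finset.sum_congr rfl fun _ _ => by ring)
    (fun _ _ _ => by
      simp only [Prod.fst_add, Prod.snd_add, Pi.add_apply, ← Finset.sum_add_distrib]
      exact Finset.sum_congr rfl fun _ _ => by ring)
    (fun _ _ _ => by
      simp only [Prod.smul_fst, Prod.smul_snd, Pi.smul_apply, smul_eq_mul, Finset.mul_sum]
      exact Finset.sum_congr rfl fun _ _ => by ring)

variable {K ι}

lemma symplecticForm_apply [CommRing K] (v w : (ι → K) × (ι → K)) :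
    symplecticForm K ι v w = ∑ i, (v.1 i * w.2 i - w.1 i * v.2 i) := rfl

lemma symplecticForm_isAlt [CommRing K] : (symplecticForm K ι).IsAlt := fun v => by
  simp [symplecticForm_apply]

lemma symplecticForm_nondegenerate [Field K] [DecidableEq ι] :
    (symplecticForm K ι).Nondegenerate := by
  refine (LinearMap.IsRefl.nondegenerate_iff_separatingLeft
    (symplecticForm_isAlt (K := K) (ι := ι)).isRefl).mpr fun v hv => ?_
  ext i
  · simpa [symplecticForm_apply, Pi.single_apply] using hv (0, Pi.single i 1)
  · simpa [symplecticForm_apply, Pi.single_apply] using hv (Pi.single i 1, 0)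

lemma finrank_le_card_of_le_orthogonal [Field K] {W : Submodule K ((ι → K) × (ι → K))}
    (hW : W ≤ (symplecticForm K ι).orthogonal W) :
    Module.finrank K W ≤ Fintype.card ι := by
  classical
  have := LinearMap.BilinForm.two_mul_finrank_le_of_le_orthogonal symplecticForm_nondegenerate hW
  rw [Module.finrank_prod, Module.finrank_fintype_fun_eq_card] at this
  omega

end Symplectic

namespace PauliString

variable {N : ℕ}

def symplecticEquiv (N : ℕ) : PauliString N ≃ (Fin N → ZMod 2) × (Fin N → ZMod 2) :=
  (Equiv.piCongrRight fun _ => Pauli.symplecticEquiv).trans (Equiv.arrowProdEquivProdArrow _ _ _)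

lemma symplecticEquiv_eq_zero_iff {A : PauliString N} :
    symplecticEquiv N A = 0 ↔ A = fun _ => Pauli.I := by
  rw [show (0 : (Fin N → ZMod 2) × (Fin N → ZMod 2)) = symplecticEquiv N fun _ => Pauli.I from rfl,
    Equiv.apply_eq_iff_eq]

lemma Pmat_eq_kroneckerPi (A : PauliString N) : Pmat A = kroneckerPi fun j => (A j).mat := rfl

lemma Pmat_mul_Pmat (A B : PauliString N) :
    Pmat A * Pmat B =
      parityChar (symplecticForm _ _ (symplecticEquiv N A) (symplecticEquiv N B)) •
        (Pmat B * Pmat A) := by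
  simp only [Pmat_eq_kroneckerPi, kroneckerPi_mul]
  rw [funext fun j => Pauli.mat_mul_mat (A j) (B j), kroneckerPi_smul, symplecticForm_apply,
    AddChar.map_sum_eq_prod]
  rfl

lemma Pmat_mul_self (A : PauliString N) : Pmat A * Pmat A = 1 := by
  simp only [Pmat_eq_kroneckerPi, kroneckerPi_mul, Pauli.mat_mul_self, kroneckerPi_one]

lemma Pmat_mul_Pmat_comm_iff (A B : PauliString N) :
    Pmat A * Pmat B = Pmat B * Pmat A ↔
      symplecticForm _ _ (symplecticEquiv N A) (symplecticEquiv N B) = 0 := by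
  have hBA : Pmat B * Pmat A ≠ 0 := left_ne_zero_of_mul_eq_one (b := Pmat A * Pmat B) <| by
    rw [mul_assoc, ← mul_assoc (Pmat A), Pmat_mul_self, one_mul, Pmat_mul_self]
  rw [Pmat_mul_Pmat, ← parityChar_eq_one_iff]
  refine ⟨fun h => smul_left_injective ℂ hBA (h.trans (one_smul ℂ _).symm), fun h => ?_⟩
  rw [h, one_smul]

end PauliString

open PauliString in
lemma card_add_one_le_of_pairwise_commute {N : ℕ} {S : Finset (PauliString N)}
    (hS : S ⊆ nonIdStrings N) (hcomm : ∀ A ∈ S, ∀ B ∈ S, Pmat A * Pmat B = Pmat B * Pmat A) :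
    #S + 1 ≤ 2 ^ N := by
  classical
  set e := symplecticEquiv N
  set W := Submodule.span (ZMod 2) (e '' S)
  have hW : W ≤ (symplecticForm _ _).orthogonal W :=
    LinearMap.BilinForm.span_le_orthogonal_span <| by
      rintro _ ⟨A, hA, rfl⟩ _ ⟨B, hB, rfl⟩
      exact (Pmat_mul_Pmat_comm_iff A B).mp (hcomm A hA B hB)
  have hcardW : Nat.card W ≤ 2 ^ N := by
    rw [Module.natCard_eq_pow_finrank (K := ZMod 2), Nat.card_zmod]
    exact Nat.pow_le_pow_right two_pos ((finrank_le_card_of_le_orthogonal hW).trans_eq (by simp))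
  have h0 : 0 ∉ S.image e := by
    simp only [Finset.mem_image, not_exists, not_and]
    intro A hA hA0
    exact (Finset.mem_filter.mp (hS hA)).2 (symplecticEquiv_eq_zero_iff.mp hA0)
  have hsub : (↑(insert 0 (S.image e)) : Set ((Fin N → ZMod 2) × (Fin N → ZMod 2))) ⊆ W := by
    rw [Finset.coe_insert, Finset.coe_image, Set.insert_subset_iff]
    exact ⟨W.zero_mem, Submodule.subset_span⟩
  calc #S + 1 = #(insert 0 (S.image e)) := by
        rw [Finset.card_insert_of_notMem h0, Finset.card_image_of_injective _ e.injective]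
    _ = (↑(insert 0 (S.image e)) : Set _).ncard := (Set.ncard_coe_finset _).symm
    _ ≤ (W : Set ((Fin N → ZMod 2) × (Fin N → ZMod 2))).ncard :=
        Set.ncard_le_ncard hsub (Set.toFinite _)
    _ = Nat.card W := (Nat.card_coe_set_eq _).symm
    _ ≤ 2 ^ N := hcardW

lemma card_nonIdStrings (N : ℕ) : #(nonIdStrings N) = 4 ^ N - 1 := by
  rw [nonIdStrings, Finset.filter_ne', Finset.card_erase_of_mem (Finset.mem_univ _),
    Finset.card_univ, Fintype.card_fun, Fintype.card_fin]
  rfl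

lemma IsCommPartition.two_pow_add_one_le_card {N : ℕ} (hN : N ≠ 0)
    {P : Finset (Finset (PauliString N))} (hP : IsCommPartition (nonIdStrings N) P) :
    2 ^ N + 1 ≤ #P := by
  obtain ⟨-, -, hcover, hcomm⟩ := hP
  have hpart : ∀ S ∈ P, #S ≤ 2 ^ N - 1 := fun S hS => by
    have := card_add_one_le_of_pairwise_commute (hcover ▸ Finset.le_sup (f := id) hS) (hcomm S hS)
    omega
  have hle : (2 ^ N + 1) * (2 ^ N - 1) ≤ #P * (2 ^ N - 1) := by
    calc (2 ^ N + 1) * (2 ^ N - 1) = #(nonIdStrings N) := by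
          rw [card_nonIdStrings, ← Nat.sq_sub_sq, one_pow, ← pow_mul, mul_comm, pow_mul]; rfl
      _ = #(P.biUnion id) := by rw [← hcover, Finset.sup_eq_biUnion]
      _ ≤ #P * (2 ^ N - 1) := Finset.card_biUnion_le_card_mul _ _ _ hpart
  exact Nat.le_of_mul_le_mul_right hle (Nat.sub_pos_of_lt (Nat.one_lt_two_pow (by omega)))

section TraceDual

variable {K L ι : Type*} [Field K] [Field L] [Algebra K L] [FiniteDimensional K L]
  [Algebra.IsSeparable K L] [Fintype ι] [DecidableEq ι]

lemma Module.Basis.sum_repr_mul_traceDual_repr (b : Module.Basis ι K L) (u v : L) :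
    ∑ i, b.repr u i * b.traceDual.repr v i = Algebra.trace K L (u * v) := by
  simp only [Module.Basis.traceDual_repr_apply, Algebra.traceForm_apply]
  conv_rhs => rw [← b.sum_repr u, Finset.sum_mul, map_sum]
  refine Finset.sum_congr rfl fun i _ => ?_
  rw [smul_mul_assoc, map_smul, smul_eq_mul, mul_comm (b i)]

noncomputable def traceDualCoords (b : Module.Basis ι K L) : (L × L) ≃ₗ[K] (ι → K) × (ι → K) :=
  b.equivFun.prodCongr b.traceDual.equivFun

lemma symplecticForm_traceDualCoords (b : Module.Basis ι K L) (x y : L × L) :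
    symplecticForm K ι (traceDualCoords b x) (traceDualCoords b y) =
      Algebra.trace K L (x.1 * y.2 - y.1 * x.2) := by
  simp only [symplecticForm_apply, Finset.sum_sub_distrib, traceDualCoords,
    LinearEquiv.prodCongr_apply, Module.Basis.equivFun_apply,
    Module.Basis.sum_repr_mul_traceDual_repr, map_sub]

end TraceDual

open scoped LinearAlgebra.Projectivization

lemma Projectivization.eq_mk_of_mem_submodule {K V : Type*} [Field K] [AddCommGroup V]
    [Module K V] {p : ℙ K V} {v : V} (hv : v ≠ 0) (h : v ∈ p.submodule) : p = mk K v hv := by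
  refine submodule_injective (Submodule.eq_of_le_of_finrank_eq ?_ ?_).symm
  · rw [submodule_mk]
    exact (Submodule.span_singleton_le_iff_mem _ _).mpr h
  · rw [submodule_mk, finrank_span_singleton hv, finrank_submodule]

lemma Projectivization.mul_sub_mul_eq_zero_of_mem_submodule {K : Type*} [Field K]
    {p : ℙ K (K × K)} {x y : K × K} (hx : x ∈ p.submodule) (hy : y ∈ p.submodule) :
    x.1 * y.2 - y.1 * x.2 = 0 := by
  rw [submodule_eq, Submodule.mem_span_singleton] at hx hy
  obtain ⟨a, rfl⟩ := hx
  obtain ⟨c, rfl⟩ := hy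
  simp only [Prod.smul_fst, Prod.smul_snd, smul_eq_mul]
  ring

section Lines

open Projectivization

variable {L : Type*} [Field L] [Fintype L] {N : ℕ}

open Classical in
noncomputable def lineStrings (e : L × L ≃ PauliString N) (p : ℙ L (L × L)) :
    Finset (PauliString N) :=
  ((Finset.univ.filter (· ∈ p.submodule)).erase 0).map e.toEmbedding

lemma mem_lineStrings {e : L × L ≃ PauliString N} {p : ℙ L (L × L)} {A : PauliString N} :
    A ∈ lineStrings e p ↔ e.symm A ≠ 0 ∧ e.symm A ∈ p.submodule := by
  simp only [lineStrings, Finset.mem_map_equiv, Finset.mem_erase, Finset.mem_filter,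
    Finset.mem_univ, true_and]

lemma card_lineStrings (e : L × L ≃ PauliString N) (p : ℙ L (L × L)) :
    #(lineStrings e p) = Fintype.card L - 1 := by
  classical
  rw [lineStrings, Finset.card_map, Finset.card_erase_of_mem (by simp [p.submodule.zero_mem]),
    ← Fintype.card_subtype, ← Nat.card_eq_fintype_card, Module.natCard_eq_pow_finrank (K := L),
    p.finrank_submodule, pow_one, Nat.card_eq_fintype_card]

lemma lineStrings_nonempty (e : L × L ≃ PauliString N) (p : ℙ L (L × L)) :
    (lineStrings e p).Nonempty :=
  ⟨e p.rep, mem_lineStrings.mpr ⟨by simpa using p.rep_nonzero,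
    by rw [Equiv.symm_apply_apply, p.submodule_eq]; exact Submodule.mem_span_singleton_self _⟩⟩

lemma eq_of_mem_lineStrings {e : L × L ≃ PauliString N} {p q : ℙ L (L × L)} {A : PauliString N}
    (hp : A ∈ lineStrings e p) (hq : A ∈ lineStrings e q) : p = q := by
  rw [mem_lineStrings] at hp hq
  rw [eq_mk_of_mem_submodule hp.1 hp.2, eq_mk_of_mem_submodule hq.1 hq.2]

lemma lineStrings_injective (e : L × L ≃ PauliString N) : Function.Injective (lineStrings e) :=
  fun p q hpq => by
    obtain ⟨A, hA⟩ := lineStrings_nonempty e p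
    exact eq_of_mem_lineStrings hA (hpq ▸ hA)

lemma exists_mem_lineStrings_iff {e : L × L ≃ PauliString N} {A : PauliString N} :
    (∃ p, A ∈ lineStrings e p) ↔ e.symm A ≠ 0 := by
  refine ⟨fun ⟨p, hp⟩ => (mem_lineStrings.mp hp).1, fun hA => ⟨mk L _ hA, ?_⟩⟩
  exact mem_lineStrings.mpr ⟨hA, Submodule.mem_span_singleton_self _⟩

theorem exists_isCommPartition_of_collinear_commute
    (e : L × L ≃ PauliString N) (he : e 0 = fun _ => Pauli.I)
    (hcomm : ∀ x y : L × L, x.1 * y.2 - y.1 * x.2 = 0 →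
      Pmat (e x) * Pmat (e y) = Pmat (e y) * Pmat (e x)) :
    ∃ P, IsCommPartition (nonIdStrings N) P ∧ #P = Fintype.card L + 1 ∧
      ∀ S ∈ P, #S = Fintype.card L - 1 := by
  classical
  have : Fintype (ℙ L (L × L)) := Fintype.ofFinite _
  refine ⟨Finset.univ.image (lineStrings e), ⟨?_, ?_, ?_, ?_⟩, ?_, ?_⟩
  · simpa using lineStrings_nonempty e
  · rw [Finset.coe_image, Finset.coe_univ, Set.image_univ]
    rintro _ ⟨p, rfl⟩ _ ⟨q, rfl⟩ hpq
    exact Finset.disjoint_left.mpr fun A hp hq => hpq (congrArg _ (eq_of_mem_lineStrings hp hq))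
  · ext A
    simp only [Finset.sup_image, Finset.mem_sup, Finset.mem_univ, true_and, Function.id_comp,
      exists_mem_lineStrings_iff, nonIdStrings, Finset.mem_filter, ne_eq, Equiv.symm_apply_eq, he]
  · simp only [Finset.mem_image, Finset.mem_univ, true_and]
    rintro _ ⟨p, rfl⟩ A hA B hB
    rw [mem_lineStrings] at hA hB
    simpa using hcomm _ _ (mul_sub_mul_eq_zero_of_mem_submodule hA.2 hB.2)
  · rw [Finset.card_image_of_injective _ (lineStrings_injective e), Finset.card_univ,
      ← Nat.card_eq_fintype_card, card_of_finrank_two, Nat.card_eq_fintype_card]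
    simp
  · simp only [Finset.mem_image, Finset.mem_univ, true_and]
    rintro _ ⟨p, rfl⟩
    exact card_lineStrings e p

end Lines

lemma exists_isCommPartition_two_pow {N : ℕ} (hN : N ≠ 0) :
    ∃ P, IsCommPartition (nonIdStrings N) P ∧ #P = 2 ^ N + 1 ∧ ∀ S ∈ P, #S = 2 ^ N - 1 := by
  let L := GaloisField 2 N
  have : Fintype L := Fintype.ofFinite L
  have hcard : Fintype.card L = 2 ^ N := by
    rw [← Nat.card_eq_fintype_card, GaloisField.card 2 N hN]
  let b : Module.Basis (Fin N) (ZMod 2) L :=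
    Module.finBasisOfFinrankEq _ _ (GaloisField.finrank 2 hN)
  let e : L × L ≃ PauliString N :=
    (traceDualCoords b).toEquiv.trans (PauliString.symplecticEquiv N).symm
  have he : e 0 = fun _ => Pauli.I :=
    PauliString.symplecticEquiv_eq_zero_iff.mp (by simp [e])
  have hcomm (x y : L × L) (hxy : x.1 * y.2 - y.1 * x.2 = 0) :
      Pmat (e x) * Pmat (e y) = Pmat (e y) * Pmat (e x) := by
    rw [PauliString.Pmat_mul_Pmat_comm_iff]
    simp [e, symplecticForm_traceDualCoords, hxy]
  simpa only [hcard] using exists_isCommPartition_of_collinear_commute e he hcomm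

/-- The minimum number of parts in a partition of the `4^N - 1` non-identity `N`-qubit
Pauli strings into pairwise-commuting families is exactly `2^N + 1`; moreover such a
partition exists in which every part has size `2^N - 1` (a MUB structure). -/
theorem min_commuting_partition_of_nonidentity {N : ℕ} (hN : 1 ≤ N) :
    IsLeast {k | ∃ P, IsCommPartition (nonIdStrings N) P ∧ P.card = k} (2 ^ N + 1) ∧
    ∃ P, IsCommPartition (nonIdStrings N) P ∧ P.card = 2 ^ N + 1 ∧
      ∀ S ∈ P, S.card = 2 ^ N - 1 := by
  have hN0 : N ≠ 0 := Nat.one_le_iff_ne_zero.mp hN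
  obtain ⟨P, hP, hcard, hparts⟩ := exists_isCommPartition_two_pow hN0
  exact ⟨⟨⟨P, hP, hcard⟩, fun _ ⟨Q, hQ, hQk⟩ => hQk ▸ hQ.two_pow_add_one_le_card hN0⟩,
    P, hP, hcard, hparts⟩
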